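/- Let n ≥ 2 and let z = [z₁,…,z_{n+1}] ∈ ∂ℍⁿ_ℂ with z not in the projective line Span({[e₁],[e_{n+1}]}). Let M_z be the (n−1)×(n−1) matrix with (i,j) entry z_{i+1} z̄_{j+1} for i ≠ j and z_{n+1} z̄₁ + |z_{i+1}|² for i = j. Then the vector z̃₀ = (z₂,…,z_n) is an eigenvector of M_z with eigenvalue λ_z = z_{n+1} z̄₁ + Σ_{j=2}^{n} |z_j|² = −z₁ z̄_{n+1} = |z₁ z̄_{n+1}| e^{i𝔸([e₁],[z],[e_{n+1}])}, where 𝔸 denotes the Cartan angular invariant. -/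

import Mathlib

/-!
`H` is the permutation matrix of the transposition exchanging the first and last coordinates, so
`⟨v, w⟩ = v₁ w̄ₙ₊₁ + vₙ₊₁ w̄₁ + Σ_{j=2}^{n} vⱼ w̄ⱼ` and `⟨e₁, z⟩⟨z, eₙ₊₁⟩⟨eₙ₊₁, e₁⟩ = z₁ z̄ₙ₊₁`.
Writing `z̃₀ = (z₂, …, zₙ)`, the matrix is `M_z = zₙ₊₁ z̄₁ I + z̃₀ z̃₀*`, hence
`M_z z̃₀ = (zₙ₊₁ z̄₁ + |z̃₀|²) z̃₀`. The null condition `⟨z, z⟩ = 0` says exactly that this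
eigenvalue is `−z₁ z̄ₙ₊₁`, whose argument is the Cartan invariant `𝔸([e₁], [z], [eₙ₊₁])`.
-/

noncomputable section

open scoped ComplexConjugate
open scoped Matrix

namespace CKG

/-- The underlying vector space `ℂ^{n+1}`. -/
abbrev Vc (n : ℕ) := Fin (n + 1) → ℂ

instance projTopInst (K V : Type*) [DivisionRing K] [AddCommGroup V] [Module K V]
    [TopologicalSpace V] : TopologicalSpace (Projectivization K V) :=
  inferInstanceAs (TopologicalSpace (Quotient (projectivizationSetoid K V)))

/-- The complex projective space `ℙⁿ_ℂ`. -/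
abbrev Prj (n : ℕ) := Projectivization ℂ (Vc n)

/-- The Hermitian matrix `H` with ones at the corners `(1,n+1)`, `(n+1,1)` and the identity
in the central `(n-1) × (n-1)` block. -/
def Hmat (n : ℕ) : Matrix (Fin (n + 1)) (Fin (n + 1)) ℂ := fun i j =>
  if (i = 0 ∧ j = Fin.last n) ∨ (i = Fin.last n ∧ j = 0) ∨
      (i = j ∧ i ≠ 0 ∧ i ≠ Fin.last n) then 1 else 0

/-- The Hermitian form of signature `(1,n)` induced by `H`. -/
def herm (n : ℕ) (v w : Vc n) : ℂ := ∑ i, ∑ j, v i * Hmat n i j * conj (w j)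

/-- The projective hyperplane `p^⊥` of points orthogonal to `p`. -/
def orthHyp (n : ℕ) (p : Prj n) : Set (Prj n) := {q | herm n q.rep p.rep = 0}

/-- The projective span of a set of points of `ℙⁿ_ℂ`, as a set of points. -/
def projSpan (n : ℕ) (S : Set (Prj n)) : Set (Prj n) :=
  {r | r.rep ∈ Submodule.span ℂ (Projectivization.rep '' S)}

/-- The standard basis vector `e₁`. -/
def e1v (n : ℕ) : Vc n := Pi.single 0 1

/-- The standard basis vector `e_{n+1}`. -/
def eN1v (n : ℕ) : Vc n := Pi.single (Fin.last n) 1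

lemma e1v_ne_zero (n : ℕ) : e1v n ≠ 0 := by
  intro h; have := congrFun h 0; simp [e1v] at this

lemma eN1v_ne_zero (n : ℕ) : eN1v n ≠ 0 := by
  intro h; have := congrFun h (Fin.last n); simp [eN1v] at this

/-- The point `[e₁] ∈ ℙⁿ_ℂ`. -/
def e1pt (n : ℕ) : Prj n := Projectivization.mk ℂ (e1v n) (e1v_ne_zero n)

/-- The point `[e_{n+1}] ∈ ℙⁿ_ℂ`. -/
def eN1pt (n : ℕ) : Prj n := Projectivization.mk ℂ (eN1v n) (eN1v_ne_zero n)

/-- The inclusion of indices `{1, …, n-1}` (numbering `e₂, …, e_n`) into `Fin (n+1)`. -/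
def idx {n : ℕ} (i : Fin (n - 1)) : Fin (n + 1) := ⟨i.val + 1, by omega⟩

/-- The `(n-1) × (n-1)` matrix `M_z` with `(i,j)` entry `z_{i+1} z̄_{j+1}` for `i ≠ j` and
`z_{n+1} z̄₁ + |z_{i+1}|²` for `i = j`. -/
def Mz (n : ℕ) (z : Vc n) : Matrix (Fin (n - 1)) (Fin (n - 1)) ℂ := fun i j =>
  (if i = j then z (Fin.last n) * conj (z 0) else 0) + z (idx i) * conj (z (idx j))

/-- The embedding `ℂ^{n-1} → ℂ^{n+1}` into the coordinates `2, …, n`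
(realizing the identification of `ℙ^{n-2}_ℂ` with `Span({e₂,…,e_n})`). -/
def embedMid (n : ℕ) (u : Fin (n - 1) → ℂ) : Vc n :=
  fun i => ∑ j : Fin (n - 1), if idx j = i then u j else 0

/-- The projection `ℂ^{n+1} → ℂ^{n-1}` onto the coordinates `2, …, n`. -/
def midOf (n : ℕ) (v : Vc n) : Fin (n - 1) → ℂ := fun j => v (idx j)

/-- The Cartan angular invariant `𝔸(x,y,w) = arg(−⟨x,y⟩⟨y,w⟩⟨w,x⟩)`. -/
def cartanArg (n : ℕ) (x y w : Vc n) : ℝ :=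
  Complex.arg (-(herm n x y * herm n y w * herm n w x))

/-- The map `φ_z` of the paper, at the level of sets:
`φ_z(w) = Span((Span((Span({w,e_{n+1}}) ∩ z^⊥) ∪ {z}) ∩ e₁^⊥) ∪ {e₁}) ∩ e_{n+1}^⊥`. -/
def phiSet (n : ℕ) (z w : Prj n) : Set (Prj n) :=
  projSpan n
    ((projSpan n ((projSpan n {w, eN1pt n} ∩ orthHyp n z) ∪ {z}) ∩ orthHyp n (e1pt n))
      ∪ {e1pt n}) ∩ orthHyp n (eN1pt n)

end CKG

namespace Matrix

lemma smul_one_add_vecMulVec_star_mulVec_self {m α : Type*} [Fintype m] [DecidableEq m]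
    [CommRing α] [StarRing α] (c : α) (u : m → α) :
    (c • 1 + vecMulVec u (star u)) *ᵥ u = (c + star u ⬝ᵥ u) • u := by
  rw [add_mulVec, smul_mulVec, one_mulVec, vecMulVec_mulVec, op_smul_eq_smul, add_smul]

end Matrix

namespace CKG

lemma Hmat_apply (n : ℕ) (i j : Fin (n + 1)) :
    Hmat n i j = if j = Equiv.swap 0 (Fin.last n) i then 1 else 0 := by
  unfold Hmat
  rw [Equiv.swap_apply_def]
  split_ifs <;> grind

lemma herm_eq_sum_swap (n : ℕ) (v w : Vc n) :
    herm n v w = ∑ i, v i * conj (w (Equiv.swap 0 (Fin.last n) i)) := by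
  simp [herm, Hmat_apply, mul_ite]

lemma herm_single_one_left (n : ℕ) (a : Fin (n + 1)) (w : Vc n) :
    herm n (Pi.single a 1) w = conj (w (Equiv.swap 0 (Fin.last n) a)) := by
  simp [herm_eq_sum_swap, Pi.single_apply]

lemma herm_single_one_right (n : ℕ) (v : Vc n) (b : Fin (n + 1)) :
    herm n v (Pi.single b 1) = v (Equiv.swap 0 (Fin.last n) b) := by
  simp [herm_eq_sum_swap, Pi.single_apply, Equiv.swap_apply_eq_iff]

lemma cartanArg_e1v_eN1v (n : ℕ) (z : Vc n) :
    cartanArg n (e1v n) z (eN1v n) = Complex.arg (-(z 0 * conj (z (Fin.last n)))) := by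
  simp [cartanArg, e1v, eN1v, herm_single_one_left, herm_single_one_right, mul_comm]

lemma sum_univ_eq_zero_add_last_add_sum_idx {M : Type*} [AddCommMonoid M] (n : ℕ) (hn : 0 < n)
    (f : Fin (n + 1) → M) :
    ∑ i, f i = f 0 + f (Fin.last n) + ∑ j : Fin (n - 1), f (idx j) := by
  obtain ⟨m, rfl⟩ : ∃ m, n = m + 1 := ⟨n - 1, by omega⟩
  rw [Fin.sum_univ_succ, Fin.sum_univ_castSucc, add_comm (∑ _ : Fin m, _), ← add_assoc]
  rfl

lemma herm_eq_add_sum_idx (n : ℕ) (hn : 0 < n) (v w : Vc n) :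
    herm n v w = v 0 * conj (w (Fin.last n)) + v (Fin.last n) * conj (w 0) +
      ∑ j : Fin (n - 1), v (idx j) * conj (w (idx j)) := by
  have swap_idx (j : Fin (n - 1)) : Equiv.swap 0 (Fin.last n) (idx j) = idx j :=
    Equiv.swap_apply_of_ne_of_ne (by simp [idx, Fin.ext_iff])
      (by simp [idx, Fin.ext_iff]; omega)
  simp [herm_eq_sum_swap, sum_univ_eq_zero_add_last_add_sum_idx n hn, swap_idx]

lemma Mz_eq_smul_one_add_vecMulVec (n : ℕ) (z : Vc n) :
    Mz n z = (z (Fin.last n) * conj (z 0)) • 1 +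
      Matrix.vecMulVec (midOf n z) (star (midOf n z)) := by
  ext i j
  simp [Mz, Matrix.vecMulVec, Matrix.one_apply, midOf]

lemma Mz_mulVec_midOf (n : ℕ) (z : Vc n) :
    Mz n z *ᵥ midOf n z = (z (Fin.last n) * conj (z 0) +
      ∑ j : Fin (n - 1), z (idx j) * conj (z (idx j))) • midOf n z := by
  rw [Mz_eq_smul_one_add_vecMulVec, Matrix.smul_one_add_vecMulVec_star_mulVec_self]
  simp [dotProduct, midOf, mul_comm]

theorem mid_z_eigenvector_of_Mz_general
    (n : ℕ) (hn : 2 ≤ n) (zv : Vc n)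
    (hbd : herm n zv zv = 0) :
    ∃ lam : ℂ,
      (Mz n zv).mulVec (midOf n zv) = lam • midOf n zv ∧
      lam = zv (Fin.last n) * conj (zv 0) +
        ∑ j : Fin (n - 1), zv (idx j) * conj (zv (idx j)) ∧
      lam = -(zv 0 * conj (zv (Fin.last n))) ∧
      lam = ((‖zv 0 * conj (zv (Fin.last n))‖ : ℝ) : ℂ) *
        Complex.exp (Complex.I * (cartanArg n (e1v n) zv (eN1v n))) := by
  have hlam : zv (Fin.last n) * conj (zv 0) + ∑ j : Fin (n - 1), zv (idx j) * conj (zv (idx j))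
      = -(zv 0 * conj (zv (Fin.last n))) := by
    linear_combination hbd - herm_eq_add_sum_idx n (by omega) zv zv
  refine ⟨_, Mz_mulVec_midOf n zv, rfl, hlam, ?_⟩
  rw [hlam, cartanArg_e1v_eN1v, ← norm_neg, mul_comm Complex.I]
  exact (Complex.norm_mul_exp_arg_mul_I _).symm

/-- For `z ∈ ∂ℍⁿ_ℂ` not on the projective line through `[e₁]` and
`[e_{n+1}]` (i.e. `(z₂,…,z_n) ≠ 0`), the vector `z̃₀ = (z₂,…,z_n)` is an eigenvector of `M_z`
with eigenvalue `λ_z = z_{n+1} z̄₁ + Σ_{j=2}^n |z_j|² = −z₁ z̄_{n+1}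
= |z₁ z̄_{n+1}| e^{i𝔸([e₁],[z],[e_{n+1}])}`. -/
theorem mid_z_eigenvector_of_Mz
    (n : ℕ) (hn : 2 ≤ n) (zv : Vc n) (hzne : zv ≠ 0)
    (hbd : herm n zv zv = 0)
    (hmid : midOf n zv ≠ 0) :
    ∃ lam : ℂ,
      (Mz n zv).mulVec (midOf n zv) = lam • midOf n zv ∧
      lam = zv (Fin.last n) * conj (zv 0) +
        ∑ j : Fin (n - 1), zv (idx j) * conj (zv (idx j)) ∧
      lam = -(zv 0 * conj (zv (Fin.last n))) ∧
      lam = ((‖zv 0 * conj (zv (Fin.last n))‖ : ℝ) : ℂ) *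
        Complex.exp (Complex.I * (cartanArg n (e1v n) zv (eN1v n))) :=
  mid_z_eigenvector_of_Mz_general n hn zv hbd

end CKG
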